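/- arXiv:2009.13198 — 4 statements merged into one kernel-verified Lean document; each statement's English description precedes it below -/
import Mathlib

section
/- Let V be a finite set of n nodes and let Att1, Att2 be two periodic attractors (finite sequences of binary vectors indexed by V, of periods p1 and p2). For a subset Ŵ ⊆ V, define Dist(Att1, Att2, Ŵ) = min over shifts t ∈ {0,...,lcm(p1,p2)−1} of the number of nodes v ∈ Ŵ such that the infinite periodic sequence of values of v in Att1 (starting at time 0) differs from that in Att2 starting at time t. For a subset V̂ ⊆ V and the graph G on vertex set V̂ with edges {v,w} whenever Dist(Att1, Att2, {v,w}) = 0: if G has at least one edge, then Dist(Att1, Att2, V̂) = |V̂| − γ, where γ is the size of a maximum clique of G. -/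
/-!
For each node `v`, `Ser B v 0` is a periodic point of the shift map, so the shifts `t` with
`Ser A v 0 = Ser B v t` are either none or a whole residue class modulo its minimal period.
The distance on `Vhat` is `#Vhat` minus the largest number of nodes matched by one shift
`t < lcm p1 p2`. The nodes matched by one shift form a clique of `G`, so that number is at most
`γ`. Conversely, on a clique these residue classes pairwise intersect, and pairwise compatible
congruences have a common solution (the Chinese remainder theorem for arbitrary moduli), so a
maximum clique is matched by a single shift. The edge makes `γ ≥ 2`, which is what guarantees
that every vertex of the clique has a matching shift at all.
-/

attribute [local instance] Classical.propDecidable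

/-- The distance between two periodic attractors `A` (period `p1`) and `B` (period `p2`)
observed on the node set `W`: the minimum over time shifts `t ∈ {0, …, lcm(p1,p2)−1}`
of the number of nodes `v ∈ W` whose infinite sequence of values in `A` (from time 0)
differs from that in `B` (from time `t`). -/
noncomputable def AttDist {V : Type*} (A B : ℕ → V → Bool) (p1 p2 : ℕ) (W : Finset V) : ℕ :=
  sInf {c : ℕ | ∃ t < Nat.lcm p1 p2, c = (W.filter (fun v => ∃ k, A k v ≠ B (t + k) v)).card}

theorem Function.iterate_eq_iterate_iff_modEq_minimalPeriod {α : Type*} {f : α → α} {x : α}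
    (hx : x ∈ periodicPts f) {m n : ℕ} :
    f^[m] x = f^[n] x ↔ m ≡ n [MOD minimalPeriod f x] := by
  have hd := minimalPeriod_pos_of_mem_periodicPts hx
  have hper := isPeriodicPt_minimalPeriod f x
  rw [← hper.iterate_mod_apply m, ← hper.iterate_mod_apply n,
    iterate_eq_iterate_iff_of_lt_minimalPeriod (Nat.mod_lt _ hd) (Nat.mod_lt _ hd)]
  rfl

namespace Nat

theorem gcd_lcm_dvd_lcm_gcd (a b c : ℕ) : gcd a (lcm b c) ∣ lcm (gcd a b) (gcd a c) := by
  rcases eq_or_ne a 0 with rfl | ha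
  · simp
  rcases eq_or_ne b 0 with rfl | hb
  · simpa using dvd_lcm_left _ _
  rcases eq_or_ne c 0 with rfl | hc
  · simpa using dvd_lcm_right _ _
  have hab : gcd a b ≠ 0 := gcd_ne_zero_left ha
  have hac : gcd a c ≠ 0 := gcd_ne_zero_left ha
  rw [← factorization_le_iff_dvd (gcd_ne_zero_left ha) (lcm_ne_zero hab hac),
    factorization_gcd ha (lcm_ne_zero hb hc), factorization_lcm hb hc, factorization_lcm hab hac,
    factorization_gcd ha hb, factorization_gcd ha hc, Finsupp.le_def]
  intro p
  simp only [Finsupp.inf_apply, Finsupp.sup_apply]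
  omega

theorem gcd_finset_lcm_dvd {ι : Type*} (a : ℕ) (s : Finset ι) (n : ι → ℕ) :
    gcd a (s.lcm n) ∣ s.lcm fun i => gcd a (n i) := by
  induction s using Finset.induction_on with
  | empty => simp
  | insert i s _ ih =>
    rw [Finset.lcm_insert, Finset.lcm_insert, lcm_eq_nat_lcm, lcm_eq_nat_lcm]
    exact (gcd_lcm_dvd_lcm_gcd a _ _).trans (lcm_dvd_lcm dvd_rfl ih)

theorem ModEq.finset_lcm {ι : Type*} {s : Finset ι} {n : ι → ℕ} {a b : ℕ}
    (h : ∀ i ∈ s, a ≡ b [MOD n i]) : a ≡ b [MOD s.lcm n] := by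
  induction s using Finset.induction_on with
  | empty => simp [modEq_one]
  | insert i s _ ih =>
    rw [Finset.forall_mem_insert] at h
    rw [Finset.lcm_insert, lcm_eq_nat_lcm]
    exact mod_lcm h.1 (ih h.2)

theorem exists_modEq_of_pairwise_modEq_gcd {ι : Type*} (s : Finset ι) (n r : ι → ℕ)
    (h : ∀ i ∈ s, ∀ j ∈ s, r i ≡ r j [MOD gcd (n i) (n j)]) :
    ∃ x, ∀ i ∈ s, x ≡ r i [MOD n i] := by
  induction s using Finset.induction_on with
  | empty => simp
  | insert j s _ ih =>
    obtain ⟨x, hx⟩ := ih fun i hi k hk =>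
      h i (Finset.mem_insert_of_mem hi) k (Finset.mem_insert_of_mem hk)
    have hcompat : r j ≡ x [MOD gcd (n j) (s.lcm n)] :=
      (ModEq.finset_lcm fun i hi =>
        (h j (Finset.mem_insert_self j s) i (Finset.mem_insert_of_mem hi)).trans
          ((hx i hi).of_dvd (gcd_dvd_right _ _)).symm).of_dvd (gcd_finset_lcm_dvd _ _ _)
    obtain ⟨y, hyj, hys⟩ := chineseRemainder' hcompat
    exact ⟨y, Finset.forall_mem_insert _ _ _ |>.2
      ⟨hyj, fun i hi => (hys.of_dvd (Finset.dvd_lcm hi)).trans (hx i hi)⟩⟩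

end Nat

section Ser

variable {V α : Type*}

def Ser (B : ℕ → V → α) (v : V) (t : ℕ) : Stream' α := fun k => B (t + k) v

theorem ser_eq_tail_iterate (B : ℕ → V → α) (v : V) (t : ℕ) :
    Ser B v t = Stream'.tail^[t] (Ser B v 0) := by
  induction t with
  | zero => rfl
  | succ t ih =>
    rw [Function.iterate_succ_apply', ← ih]
    funext k
    simp only [Ser, Stream'.tail, Stream'.get]
    congr 1
    omega

theorem ser_zero_eq_ser_iff {A B : ℕ → V → α} {v : V} {t : ℕ} :
    Ser A v 0 = Ser B v t ↔ ∀ k, A k v = B (t + k) v := by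
  refine ⟨fun h k => ?_, fun h => funext fun k => ?_⟩
  · simpa [Ser] using congrFun h k
  · simpa [Ser] using h k

variable {A B : ℕ → V → α} {p : ℕ}

theorem ser_isPeriodicPt (hB : ∀ t v, B (t + p) v = B t v) (v : V) :
    Function.IsPeriodicPt Stream'.tail p (Ser B v 0) := by
  rw [Function.IsPeriodicPt, Function.IsFixedPt, ← ser_eq_tail_iterate]
  funext k
  simp only [Ser, Nat.add_comm p, Nat.zero_add, hB]

theorem ser_eq_ser_iff_modEq (hp : 0 < p) (hB : ∀ t v, B (t + p) v = B t v) (v : V) {s t : ℕ} :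
    Ser B v s = Ser B v t ↔ s ≡ t [MOD Function.minimalPeriod Stream'.tail (Ser B v 0)] := by
  rw [ser_eq_tail_iterate, ser_eq_tail_iterate B v t,
    Function.iterate_eq_iterate_iff_modEq_minimalPeriod ⟨p, hp, ser_isPeriodicPt hB v⟩]

theorem ser_mod_of_dvd (hp : 0 < p) (hB : ∀ t v, B (t + p) v = B t v) (v : V) {L : ℕ}
    (hL : p ∣ L) (t : ℕ) : Ser B v (t % L) = Ser B v t :=
  (ser_eq_ser_iff_modEq hp hB v).2 <|
    (Nat.mod_modEq t L).of_dvd ((ser_isPeriodicPt hB v).minimalPeriod_dvd.trans hL)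

theorem exists_common_shift_of_pairwise (hp : 0 < p) (hB : ∀ t v, B (t + p) v = B t v)
    (s : Finset V)
    (h : ∀ v ∈ s, ∀ w ∈ s, ∃ u, Ser A v 0 = Ser B v u ∧ Ser A w 0 = Ser B w u) :
    ∃ t, ∀ v ∈ s, Ser A v 0 = Ser B v t := by
  choose! r hr using fun v hv => (h v hv v hv).imp fun _ => And.left
  have hmod : ∀ v ∈ s, ∀ {u}, Ser A v 0 = Ser B v u ↔
      r v ≡ u [MOD Function.minimalPeriod Stream'.tail (Ser B v 0)] := fun v hv {u} => by
    rw [hr v hv, ser_eq_ser_iff_modEq hp hB]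
  obtain ⟨x, hx⟩ := Nat.exists_modEq_of_pairwise_modEq_gcd s _ r fun v hv w hw => by
    obtain ⟨u, hvu, hwu⟩ := h v hv w hw
    exact (((hmod v hv).1 hvu).of_dvd (Nat.gcd_dvd_left _ _)).trans
      (((hmod w hw).1 hwu).of_dvd (Nat.gcd_dvd_right _ _)).symm
  exact ⟨x, fun v hv => (hmod v hv).2 (hx v hv).symm⟩

theorem SimpleGraph.IsNClique.exists_common_shift (hp : 0 < p)
    (hB : ∀ t v, B (t + p) v = B t v) {G : SimpleGraph V}
    (hadj : ∀ v w, G.Adj v w → ∃ t, Ser A v 0 = Ser B v t ∧ Ser A w 0 = Ser B w t)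
    {n : ℕ} {s : Finset V} (hs : G.IsNClique n s) (hn : 2 ≤ n) :
    ∃ t, ∀ v ∈ s, Ser A v 0 = Ser B v t := by
  refine exists_common_shift_of_pairwise hp hB s fun v hv w hw => ?_
  rcases eq_or_ne v w with rfl | hvw
  · obtain ⟨x, hx, hxv⟩ := Finset.exists_mem_ne (hs.card_eq ▸ hn) v
    obtain ⟨u, hu, -⟩ := hadj v x (hs.isClique hv hx hxv.symm)
    exact ⟨u, hu, hu⟩
  · exact hadj v w (hs.isClique hv hw hvw)

end Ser

section AttDist

variable {V : Type*} {A B : ℕ → V → Bool} {p1 p2 : ℕ} {W : Finset V}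

theorem card_filter_exists_ne (t : ℕ) :
    (W.filter fun v => ∃ k, A k v ≠ B (t + k) v).card =
      W.card - (W.filter fun v => Ser A v 0 = Ser B v t).card := by
  have hne : (W.filter fun v => ∃ k, A k v ≠ B (t + k) v) =
      W.filter fun v => ¬Ser A v 0 = Ser B v t := by
    refine Finset.filter_congr fun v _ => ?_
    rw [ser_zero_eq_ser_iff, not_forall]
  rw [hne, ← Finset.card_filter_add_card_filter_not (s := W) (fun v => Ser A v 0 = Ser B v t)]
  omega

theorem attDist_le_card_sub {t : ℕ} (ht : t < Nat.lcm p1 p2) :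
    AttDist A B p1 p2 W ≤ W.card - (W.filter fun v => Ser A v 0 = Ser B v t).card :=
  card_filter_exists_ne (A := A) t ▸ Nat.sInf_le ⟨t, ht, rfl⟩

theorem exists_attDist_eq_card_sub (hL : 0 < Nat.lcm p1 p2) :
    ∃ t < Nat.lcm p1 p2,
      AttDist A B p1 p2 W = W.card - (W.filter fun v => Ser A v 0 = Ser B v t).card := by
  obtain ⟨t, ht, h⟩ := Nat.sInf_mem (⟨_, 0, hL, rfl⟩ : {c : ℕ | ∃ t < Nat.lcm p1 p2,
    c = (W.filter fun v => ∃ k, A k v ≠ B (t + k) v).card}.Nonempty)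
  exact ⟨t, ht, h.trans (card_filter_exists_ne t)⟩

theorem attDist_eq_zero_iff (hp1 : 0 < p1) (hp2 : 0 < p2) (hB : ∀ t v, B (t + p2) v = B t v) :
    AttDist A B p1 p2 W = 0 ↔ ∃ t, ∀ v ∈ W, Ser A v 0 = Ser B v t := by
  have hL := Nat.lcm_pos hp1 hp2
  constructor
  · intro h0
    obtain ⟨t, -, ht⟩ := exists_attDist_eq_card_sub (A := A) (B := B) (W := W) hL
    refine ⟨t, Finset.card_filter_eq_iff.1 (le_antisymm (Finset.card_filter_le _ _) ?_)⟩
    omega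
  · rintro ⟨t, ht⟩
    have hall : ∀ v ∈ W, Ser A v 0 = Ser B v (t % Nat.lcm p1 p2) := fun v hv =>
      (ht v hv).trans (ser_mod_of_dvd hp2 hB v (Nat.dvd_lcm_right p1 p2) t).symm
    have := attDist_le_card_sub (A := A) (B := B) (W := W) (Nat.mod_lt t hL)
    rw [Finset.card_filter_eq_iff.2 hall, Nat.sub_self] at this
    omega

theorem attDist_pair_eq_zero_iff [DecidableEq V] (hp1 : 0 < p1) (hp2 : 0 < p2)
    (hB : ∀ t v, B (t + p2) v = B t v) {v w : V} :
    AttDist A B p1 p2 {v, w} = 0 ↔ ∃ t, Ser A v 0 = Ser B v t ∧ Ser A w 0 = Ser B w t := by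
  simp only [attDist_eq_zero_iff hp1 hp2 hB, Finset.forall_mem_insert, Finset.mem_singleton,
    forall_eq]

end AttDist

theorem stmt0_general {V : Type*} [DecidableEq V]
    (A B : ℕ → V → Bool) (p1 p2 : ℕ) (hp1 : 0 < p1) (hp2 : 0 < p2)
    (hB : ∀ t v, B (t + p2) v = B t v)
    (Vhat : Finset V)
    (G : SimpleGraph V)
    (hG : ∀ v w : V, G.Adj v w ↔ (v ≠ w ∧ v ∈ Vhat ∧ w ∈ Vhat ∧ AttDist A B p1 p2 {v, w} = 0))
    (γ : ℕ)
    (hclique : ∃ s : Finset V, ↑s ⊆ (Vhat : Set V) ∧ G.IsNClique γ s)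
    (hmax : ∀ (n : ℕ) (s : Finset V), ↑s ⊆ (Vhat : Set V) → G.IsNClique n s → n ≤ γ)
    (hedge : ∃ v w : V, G.Adj v w) :
    AttDist A B p1 p2 Vhat = Vhat.card - γ := by
  have hL := Nat.lcm_pos hp1 hp2
  have hadj (v w : V) : G.Adj v w ↔ v ≠ w ∧ v ∈ Vhat ∧ w ∈ Vhat ∧
      ∃ t, Ser A v 0 = Ser B v t ∧ Ser A w 0 = Ser B w t := by
    rw [hG, attDist_pair_eq_zero_iff hp1 hp2 hB]
  have hmatched_le (t : ℕ) : (Vhat.filter fun v => Ser A v 0 = Ser B v t).card ≤ γ :=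
    hmax _ _ (Finset.coe_subset.2 (Finset.filter_subset _ _)) ⟨fun v hv w hw hvw => by
      simp only [Finset.coe_filter, Set.mem_ofPred_eq] at hv hw
      exact (hadj v w).2 ⟨hvw, hv.1, hw.1, t, hv.2, hw.2⟩, rfl⟩
  have hγ : 2 ≤ γ := by
    obtain ⟨v, w, hvw⟩ := hedge
    obtain ⟨-, hv, hw, -⟩ := (hadj v w).1 hvw
    exact hmax 2 {v, w} (by simp [Set.insert_subset_iff, hv, hw])
      ((G.isNClique_singleton.2 rfl).insert (by simpa using hvw))
  obtain ⟨s, hsV, hs⟩ := hclique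
  obtain ⟨t, ht⟩ := hs.exists_common_shift hp2 hB (fun v w h => ((hadj v w).1 h).2.2.2) hγ
  have hs_matched : s ⊆ Vhat.filter fun v => Ser A v 0 = Ser B v (t % Nat.lcm p1 p2) :=
    fun v hv => Finset.mem_filter.2 ⟨hsV hv,
      (ht v hv).trans (ser_mod_of_dvd hp2 hB v (Nat.dvd_lcm_right p1 p2) t).symm⟩
  apply le_antisymm
  · calc AttDist A B p1 p2 Vhat ≤ _ := attDist_le_card_sub (Nat.mod_lt t hL)
      _ ≤ Vhat.card - γ := Nat.sub_le_sub_left (hs.card_eq ▸ Finset.card_le_card hs_matched) _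
  · obtain ⟨t₀, -, h₀⟩ := exists_attDist_eq_card_sub (A := A) (B := B) (W := Vhat) hL
    exact h₀ ▸ Nat.sub_le_sub_left (hmatched_le t₀) _

theorem stmt0 {V : Type*} [Fintype V] [DecidableEq V]
    (A B : ℕ → V → Bool) (p1 p2 : ℕ) (hp1 : 0 < p1) (hp2 : 0 < p2)
    (hA : ∀ t v, A (t + p1) v = A t v) (hB : ∀ t v, B (t + p2) v = B t v)
    (Vhat : Finset V)
    (G : SimpleGraph V)
    (hG : ∀ v w : V, G.Adj v w ↔ (v ≠ w ∧ v ∈ Vhat ∧ w ∈ Vhat ∧ AttDist A B p1 p2 {v, w} = 0))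
    (γ : ℕ)
    (hclique : ∃ s : Finset V, ↑s ⊆ (Vhat : Set V) ∧ G.IsNClique γ s)
    (hmax : ∀ (n : ℕ) (s : Finset V), ↑s ⊆ (Vhat : Set V) → G.IsNClique n s → n ≤ γ)
    (hedge : ∃ v w : V, G.Adj v w) :
    AttDist A B p1 p2 Vhat = Vhat.card - γ :=
  stmt0_general A B p1 p2 hp1 hp2 hB Vhat G hG γ hclique hmax hedge
end

section
/- Key inequality of the greedy multicover analysis: under the greedy algorithm picking sets of maximum residual coverage, at the j-th iteration the average price per covered demand-unit α = 1/|s_{t(j)} ∩ U_j| satisfies α ≤ |J*| / (M(2K+1) − Σ_{k=1}^{j−1} |s_{t(k)} ∩ U_k|), where J* is an optimal solution, U_k is the multiset of residual demand-units at iteration k, and s_{t(k)} the set chosen at iteration k. -/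
/-- Key inequality (A.1) of the greedy multicover analysis: at the `j`-th iteration, the
average price `1/|s_{t(j)} ∩ U_j|` is at most `|J*| / (M(2K+1) − Σ_{k<j} |s_{t(k)} ∩ U_k|)`. -/
theorem stmt10 {U ι : Type*} [Fintype U] [DecidableEq U] [Fintype ι] [DecidableEq ι]
    (s : ι → Finset U) (K : ℕ) (M : ℕ) (hM : M = Fintype.card U)
    (Jstar : Finset ι)
    (hJstarFeas : ∀ x : U, 2 * K + 1 ≤ (Jstar.filter (fun i => x ∈ s i)).card)
    (hJstarOpt : ∀ J' : Finset ι,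
      (∀ x : U, 2 * K + 1 ≤ (J'.filter (fun i => x ∈ s i)).card) → Jstar.card ≤ J'.card)
    (L : ℕ) (g : ℕ → ι)
    (hginj : ∀ k1 k2, k1 < L → k2 < L → g k1 = g k2 → k1 = k2)
    (cov : ℕ → U → ℕ)
    (hcov : ∀ j x, cov j x = ((Finset.range j).filter (fun k => x ∈ s (g k))).card)
    (Ures : ℕ → Finset U)
    (hUres : ∀ j, Ures j = Finset.univ.filter (fun x => cov j x < 2 * K + 1))
    (hgreedy : ∀ j < L, ∀ i : ι, (∀ k < j, g k ≠ i) →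
      (s i ∩ Ures j).card ≤ (s (g j) ∩ Ures j).card)
    (hrun : ∀ j < L, (Ures j).Nonempty)
    (j : ℕ) (hj : j < L) :
    (1 : ℝ) / ((s (g j) ∩ Ures j).card : ℝ) ≤
      (Jstar.card : ℝ) /
        ((M * (2 * K + 1) : ℕ) - ∑ k ∈ Finset.range j, ((s (g k) ∩ Ures k).card : ℝ)) := by
  classical
  set c := (s (g j) ∩ Ures j).card with hc
  -- cov increment
  have hcovsucc : ∀ n x, cov (n+1) x = cov n x + (if x ∈ s (g n) then 1 else 0) := by
    intro n x
    rw [hcov, hcov, Finset.range_add_one, Finset.filter_insert]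
    by_cases hx : x ∈ s (g n)
    · simp [hx, Finset.card_insert_of_notMem]
    · simp [hx]
  have hmemU : ∀ n x, x ∈ Ures n ↔ cov n x < 2*K+1 := by
    intro n x; rw [hUres]; simp
  -- per-element increment of capped coverage
  have hpoint : ∀ n x, min (cov (n+1) x) (2*K+1)
      = min (cov n x) (2*K+1) + (if x ∈ s (g n) ∩ Ures n then 1 else 0) := by
    intro n x
    have h1 := hcovsucc n x
    by_cases hx : x ∈ s (g n) <;> by_cases hu : x ∈ Ures n <;>
      have := (hmemU n x) <;>
      simp [hx, hu, Finset.mem_inter] at h1 this ⊢ <;> omega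
  -- step 1: sum identity
  have hstep : ∀ m, ∑ k ∈ Finset.range m, (s (g k) ∩ Ures k).card
      = ∑ x : U, min (cov m x) (2*K+1) := by
    intro m
    induction m with
    | zero => simp [hcov]
    | succ n ih =>
      rw [Finset.sum_range_succ, ih]
      have : ∀ x : U, min (cov (n+1) x) (2*K+1)
          = min (cov n x) (2*K+1) + (if x ∈ s (g n) ∩ Ures n then 1 else 0) := hpoint n
      rw [Finset.sum_congr rfl (fun x _ => this x), Finset.sum_add_distrib]
      congr 1
      rw [← Finset.card_filter, Finset.filter_mem_eq_inter, Finset.univ_inter]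
  -- residual demand
  set D := ∑ x ∈ Ures j, (2*K+1 - cov j x) with hD
  -- total demand split
  have htot : M * (2*K+1) = D + ∑ x : U, min (cov j x) (2*K+1) := by
    have h1 : ∑ x : U, (2*K+1 - min (cov j x) (2*K+1)) = D := by
      rw [hD]
      rw [← Finset.sum_subset (Finset.subset_univ (Ures j))
          (fun x _ hx => by
            have : ¬ cov j x < 2*K+1 := fun h => hx ((hmemU j x).2 h)
            omega)]
      exact Finset.sum_congr rfl (fun x hx => by
        have : cov j x < 2*K+1 := (hmemU j x).1 hx
        omega)
    have h2 : ∑ x : U, ((2*K+1 - min (cov j x) (2*K+1)) + min (cov j x) (2*K+1))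
        = ∑ x : U, (2*K+1) := Finset.sum_congr rfl (fun x _ => by omega)
    rw [Finset.sum_add_distrib, h1] at h2
    rw [h2]
    simp [Finset.sum_const, hM, Finset.card_univ, mul_comm]
  -- the "unused J* sets containing x" bound
  have hxbound : ∀ x ∈ Ures j, 2*K+1 - cov j x ≤
      (Jstar.filter (fun i => x ∈ s i ∧ ∀ k < j, g k ≠ i)).card := by
    intro x hx
    have hsub : Jstar.filter (fun i => x ∈ s i) ⊆
        (Jstar.filter (fun i => x ∈ s i ∧ ∀ k < j, g k ≠ i)) ∪
        ((Finset.range j).filter (fun k => x ∈ s (g k))).image g := by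
      intro i hi
      simp only [Finset.mem_filter, Finset.mem_union, Finset.mem_image,
        Finset.mem_range] at hi ⊢
      by_cases h : ∀ k < j, g k ≠ i
      · exact Or.inl ⟨hi.1, hi.2, h⟩
      · push_neg at h
        obtain ⟨k, hk, hgk⟩ := h
        exact Or.inr ⟨k, ⟨hk, hgk ▸ hi.2⟩, hgk⟩
    have h1 := hJstarFeas x
    have h2 := Finset.card_le_card hsub
    have h3 := Finset.card_union_le
      (Jstar.filter (fun i => x ∈ s i ∧ ∀ k < j, g k ≠ i))
      (((Finset.range j).filter (fun k => x ∈ s (g k))).image g)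
    have h4 : (((Finset.range j).filter (fun k => x ∈ s (g k))).image g).card
        ≤ cov j x := by
      rw [hcov]; exact Finset.card_image_le
    omega
  -- double counting bound: D ≤ |Jstar| * c
  have hmain : D ≤ Jstar.card * c := by
    have h1 : D ≤ ∑ x ∈ Ures j,
        (Jstar.filter (fun i => x ∈ s i ∧ ∀ k < j, g k ≠ i)).card :=
      Finset.sum_le_sum hxbound
    have h2 : ∑ x ∈ Ures j,
        (Jstar.filter (fun i => x ∈ s i ∧ ∀ k < j, g k ≠ i)).card
        = ∑ i ∈ Jstar, ∑ x ∈ Ures j,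
            (if x ∈ s i ∧ ∀ k < j, g k ≠ i then 1 else 0) := by
      rw [Finset.sum_comm]
      exact Finset.sum_congr rfl (fun x _ => by
        rw [Finset.card_filter])
    have h3 : ∀ i ∈ Jstar, ∑ x ∈ Ures j,
        (if x ∈ s i ∧ ∀ k < j, g k ≠ i then 1 else 0) ≤ c := by
      intro i _
      by_cases hu : ∀ k < j, g k ≠ i
      · have he : ∑ x ∈ Ures j, (if x ∈ s i ∧ ∀ k < j, g k ≠ i then 1 else 0)
            = ∑ x ∈ Ures j, (if x ∈ s i then 1 else 0) :=
          Finset.sum_congr rfl (fun x _ => by rw [if_congr (and_iff_left hu) rfl rfl])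
        have he2 : ∑ x ∈ Ures j, (if x ∈ s i then 1 else 0)
            = (s i ∩ Ures j).card := by
          rw [← Finset.card_filter, Finset.filter_mem_eq_inter, Finset.inter_comm]
        rw [he, he2]
        exact hgreedy j hj i hu
      · simp [hu]
    calc D ≤ _ := h1
      _ = _ := h2
      _ ≤ ∑ _i ∈ Jstar, c := Finset.sum_le_sum h3
      _ = Jstar.card * c := by simp [mul_comm]
  -- positivity of c and D
  obtain ⟨x0, hx0⟩ := hrun j hj
  have hx0cov : cov j x0 < 2*K+1 := (hmemU j x0).1 hx0
  have hT := hxbound x0 hx0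
  have hTpos : 0 < (Jstar.filter (fun i => x0 ∈ s i ∧ ∀ k < j, g k ≠ i)).card := by omega
  obtain ⟨i0, hi0⟩ := Finset.card_pos.1 hTpos
  simp only [Finset.mem_filter] at hi0
  have hcpos : 0 < c := by
    have h1 := hgreedy j hj i0 hi0.2.2
    have h2 : 0 < (s i0 ∩ Ures j).card :=
      Finset.card_pos.2 ⟨x0, Finset.mem_inter.2 ⟨hi0.2.1, hx0⟩⟩
    omega
  have hDpos : 0 < D := by
    have : 0 < 2*K+1 - cov j x0 := by omega
    exact lt_of_lt_of_le this (Finset.single_le_sum (f := fun x => 2*K+1 - cov j x)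
      (fun x _ => Nat.zero_le _) hx0)
  -- cast to reals
  have hden : ((M * (2 * K + 1) : ℕ) : ℝ)
      - ∑ k ∈ Finset.range j, ((s (g k) ∩ Ures k).card : ℝ) = (D : ℝ) := by
    have hs : ∑ k ∈ Finset.range j, ((s (g k) ∩ Ures k).card : ℝ)
        = ((∑ k ∈ Finset.range j, (s (g k) ∩ Ures k).card : ℕ) : ℝ) := by
      push_cast; ring
    rw [hs, hstep j]
    have := htot
    push_cast [this]
    ring
  rw [hden, div_le_div_iff₀ (by exact_mod_cast hcpos) (by exact_mod_cast hDpos)]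
  rw [one_mul]
  exact_mod_cast hmain
end

section
/- In the graph G constructed for a pair of attractors (with vertices V̂ and edges {v,w} iff Dist(Att1, Att2, {v,w}) = 0), if every vertex is isolated (no edges) then either Dist(Att1, Att2, V̂) = |V̂| (when every single node already discriminates the pair, i.e., Dist(Att1, Att2, {v}) = 1 for all v ∈ V̂) or Dist(Att1, Att2, V̂) = |V̂| − 1 otherwise. -/
attribute [local instance] Classical.propDecidable

theorem stmt18 {V : Type*} [Fintype V] [DecidableEq V]
    (A B : ℕ → V → Bool) (p1 p2 : ℕ) (hp1 : 0 < p1) (hp2 : 0 < p2)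
    (hA : ∀ t v, A (t + p1) v = A t v) (hB : ∀ t v, B (t + p2) v = B t v)
    (Vhat : Finset V)
    (G : SimpleGraph V)
    (hG : ∀ v w : V, G.Adj v w ↔ (v ≠ w ∧ v ∈ Vhat ∧ w ∈ Vhat ∧ AttDist A B p1 p2 {v, w} = 0))
    (hnoedge : ∀ v w : V, ¬ G.Adj v w) :
    ((∀ v ∈ Vhat, AttDist A B p1 p2 {v} = 1) → AttDist A B p1 p2 Vhat = Vhat.card) ∧
    (¬ (∀ v ∈ Vhat, AttDist A B p1 p2 {v} = 1) → AttDist A B p1 p2 Vhat = Vhat.card - 1) := by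
  have hL : 0 < Nat.lcm p1 p2 := Nat.lcm_pos hp1 hp2
  have hne : ∀ (W : Finset V),
      {c : ℕ | ∃ t < Nat.lcm p1 p2,
        c = (W.filter (fun v => ∃ k, A k v ≠ B (t + k) v)).card}.Nonempty :=
    fun W => ⟨_, 0, hL, rfl⟩
  -- no two distinct vertices of Vhat can agree at the same shift
  have key : ∀ t, ∀ v ∈ Vhat, ∀ w ∈ Vhat, v ≠ w → t < Nat.lcm p1 p2 →
      (∀ k, A k v = B (t + k) v) → ∃ k, A k w ≠ B (t + k) w := by
    intro t v hv w hw hvw ht hagr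
    by_contra hcon
    push_neg at hcon
    have h0 : AttDist A B p1 p2 {v, w} = 0 := by
      unfold AttDist
      apply Nat.sInf_eq_zero.mpr
      left
      refine ⟨t, ht, ?_⟩
      symm
      rw [Finset.card_eq_zero, Finset.filter_eq_empty_iff]
      intro x hx
      simp only [Finset.mem_insert, Finset.mem_singleton] at hx
      rcases hx with rfl | rfl
      · push_neg; exact hagr
      · push_neg; exact hcon
    exact hnoedge v w ((hG v w).mpr ⟨hvw, hv, hw, h0⟩)
  have s1 : ∀ v, AttDist A B p1 p2 {v} = 1 →
      ∀ t < Nat.lcm p1 p2, ∃ k, A k v ≠ B (t + k) v := by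
    intro v h1 t ht
    by_contra hcon
    push_neg at hcon
    have h0 : AttDist A B p1 p2 {v} = 0 := by
      unfold AttDist
      apply Nat.sInf_eq_zero.mpr
      left
      refine ⟨t, ht, ?_⟩
      symm
      rw [Finset.card_eq_zero, Finset.filter_eq_empty_iff]
      intro x hx
      rw [Finset.mem_singleton] at hx
      subst hx
      push_neg
      exact hcon
    omega
  have s0 : ∀ v, AttDist A B p1 p2 {v} ≠ 1 →
      ∃ t < Nat.lcm p1 p2, ∀ k, A k v = B (t + k) v := by
    intro v h1
    obtain ⟨t, ht, hc⟩ := Nat.sInf_mem (hne {v})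
    refine ⟨t, ht, ?_⟩
    have hle : (({v} : Finset V).filter (fun x => ∃ k, A k x ≠ B (t + k) x)).card ≤ 1 :=
      le_trans (Finset.card_filter_le _ _) (by simp)
    have h2 : AttDist A B p1 p2 {v} =
        (({v} : Finset V).filter (fun x => ∃ k, A k x ≠ B (t + k) x)).card := hc
    have h3 : (({v} : Finset V).filter (fun x => ∃ k, A k x ≠ B (t + k) x)).card = 0 := by
      omega
    rw [Finset.card_eq_zero, Finset.filter_eq_empty_iff] at h3
    have := h3 (Finset.mem_singleton_self v)
    push_neg at this
    exact this
  have lb : ∀ t < Nat.lcm p1 p2,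
      Vhat.card - 1 ≤ (Vhat.filter (fun v => ∃ k, A k v ≠ B (t + k) v)).card := by
    intro t ht
    have h1 : (Vhat.filter (fun v => ¬ ∃ k, A k v ≠ B (t + k) v)).card ≤ 1 := by
      apply Finset.card_le_one.mpr
      intro a ha b hb
      simp only [Finset.mem_filter] at ha hb
      obtain ⟨ha1, ha2⟩ := ha
      obtain ⟨hb1, hb2⟩ := hb
      push_neg at ha2 hb2
      by_contra hab
      obtain ⟨k, hk⟩ := key t a ha1 b hb1 hab ht ha2
      exact hk (hb2 k)
    have h2 := Finset.card_filter_add_card_filter_not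
      (s := Vhat) (p := fun v => ∃ k, A k v ≠ B (t + k) v)
    omega
  constructor
  · intro hall
    unfold AttDist
    apply le_antisymm
    · apply Nat.sInf_le
      refine ⟨0, hL, ?_⟩
      rw [Finset.filter_true_of_mem (fun v hv => s1 v (hall v hv) 0 hL)]
    · apply le_csInf (hne Vhat)
      rintro c ⟨t, ht, rfl⟩
      rw [Finset.filter_true_of_mem (fun v hv => s1 v (hall v hv) t ht)]
  · intro hnall
    push_neg at hnall
    obtain ⟨v0, hv0, h0⟩ := hnall
    obtain ⟨t0, ht0, hagr⟩ := s0 v0 h0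
    unfold AttDist
    apply le_antisymm
    · apply Nat.sInf_le
      refine ⟨t0, ht0, ?_⟩
      have heq : Vhat.filter (fun v => ∃ k, A k v ≠ B (t0 + k) v) = Vhat.erase v0 := by
        ext x
        simp only [Finset.mem_filter, Finset.mem_erase]
        constructor
        · rintro ⟨hx, k, hk⟩
          refine ⟨?_, hx⟩
          rintro rfl
          exact hk (hagr k)
        · rintro ⟨hxne, hx⟩
          exact ⟨hx, key t0 v0 hv0 x hx (Ne.symm hxne) ht0 hagr⟩
      rw [heq, Finset.card_erase_of_mem hv0]
    · apply le_csInf (hne Vhat)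
      rintro c ⟨t, ht, rfl⟩
      exact lb t ht
end

section
/- For each fixed set Ŵ and shift t, the disagreement vector Dif(Ŵ, t) assigning to each v ∈ Ŵ the value 1 if the sequences of v in Att1 (from 0) and Att2 (from t) differ (0 otherwise) satisfies: the set of nodes with value 0 at shift t forms a clique in the graph G on V̂ with edges {v,w} iff Dist(Att1, Att2, {v,w}) = 0; and Dist(Att1, Att2, Ŵ) = |Ŵ| − max_t |{v ∈ Ŵ : Dif(Ŵ,t)(v) = 0}|. -/
attribute [local instance] Classical.propDecidable

theorem stmt19 {V : Type*} [Fintype V] [DecidableEq V]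
    (A B : ℕ → V → Bool) (p1 p2 : ℕ) (hp1 : 0 < p1) (hp2 : 0 < p2)
    (hA : ∀ t v, A (t + p1) v = A t v) (hB : ∀ t v, B (t + p2) v = B t v)
    (Vhat : Finset V)
    (G : SimpleGraph V)
    (hG : ∀ v w : V, G.Adj v w ↔ (v ≠ w ∧ v ∈ Vhat ∧ w ∈ Vhat ∧ AttDist A B p1 p2 {v, w} = 0))
    -- the zero-set of the disagreement vector at shift t
    (Z : ℕ → Finset V)
    (hZ : ∀ t, Z t = Vhat.filter (fun v => ¬ ∃ k, A k v ≠ B (t + k) v)) :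
    (∀ t < Nat.lcm p1 p2, G.IsClique (↑(Z t) : Set V)) ∧
    AttDist A B p1 p2 Vhat =
      Vhat.card - (Finset.range (Nat.lcm p1 p2)).sup (fun t => (Z t).card) := by
  have hL : 0 < Nat.lcm p1 p2 := Nat.pos_of_ne_zero (Nat.lcm_ne_zero hp1.ne' hp2.ne')
  constructor
  · intro t ht v hv w hw hvw
    rw [hZ] at hv hw
    simp only [Finset.coe_filter, Set.mem_setOf_eq] at hv hw
    rw [hG]
    refine ⟨hvw, hv.1, hw.1, ?_⟩
    have h0 : (0 : ℕ) ∈ {c : ℕ | ∃ t' < Nat.lcm p1 p2,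
        c = (({v, w} : Finset V).filter (fun x => ∃ k, A k x ≠ B (t' + k) x)).card} := by
      refine ⟨t, ht, ?_⟩
      rw [eq_comm, Finset.card_eq_zero, Finset.filter_eq_empty_iff]
      intro x hx
      rcases Finset.mem_insert.mp hx with rfl | hx
      · exact hv.2
      · rw [Finset.mem_singleton] at hx; subst hx; exact hw.2
    exact Nat.le_zero.mp (Nat.sInf_le h0)
  · have hcard : ∀ t, (Vhat.filter (fun v => ∃ k, A k v ≠ B (t + k) v)).card
        = Vhat.card - (Z t).card := by
      intro t
      rw [hZ]
      have := Finset.card_filter_add_card_filter_not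
        (s := Vhat) (p := fun v => ∃ k, A k v ≠ B (t + k) v)
      omega
    obtain ⟨t0, ht0, hsup⟩ := Finset.exists_mem_eq_sup (Finset.range (Nat.lcm p1 p2))
      ⟨0, Finset.mem_range.mpr hL⟩ (fun t => (Z t).card)
    rw [Finset.mem_range] at ht0
    apply le_antisymm
    · calc AttDist A B p1 p2 Vhat ≤ Vhat.card - (Z t0).card := by
            apply Nat.sInf_le
            exact ⟨t0, ht0, (hcard t0).symm⟩
        _ = _ := by rw [hsup]
    · refine le_csInf ⟨_, 0, hL, rfl⟩ ?_
      rintro c ⟨t, ht, rfl⟩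
      rw [hcard t, hsup]
      have hle : (Z t).card ≤ (Z t0).card := by
        rw [← hsup]
        exact Finset.le_sup (f := fun t => (Z t).card) (Finset.mem_range.mpr ht)
      omega
end
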